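/- arXiv:2104.13166 — 2 statements merged into one kernel-verified Lean document; each statement's English description precedes it below -/
import Mathlib

section
/- If Q ∈ ℝ^{n×n} is skew-symmetric and P ∈ ℝ^{n×n} is symmetric positive definite, then the matrix PQ is diagonalizable over ℂ. -/
/-!
With `R = √P` we have `P * Q * R = R * (R * Q * R)`, so `P * Q` is similar to the real
skew-symmetric matrix `R * Q * R`. Over `ℂ`, `i • (R * Q * R)` is Hermitian, hence unitarily
diagonalizable by the spectral theorem.
-/

namespace Matrix

variable {n : Type*} [Fintype n] [DecidableEq n]

def IsDiagonalizable {R : Type*} [CommRing R] (A : Matrix n n R) : Prop :=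
  ∃ (S : Matrix n n R) (d : n → R), IsUnit S ∧ A = S * diagonal d * S⁻¹

section CommRing

variable {R : Type*} [CommRing R]

theorem isDiagonalizable_iff_exists_mul_eq {A : Matrix n n R} :
    A.IsDiagonalizable ↔ ∃ (S : Matrix n n R) (d : n → R), IsUnit S ∧ A * S = S * diagonal d := by
  refine exists₂_congr fun S d => and_congr_right fun hS => ?_
  have := hS.nonempty_invertible.some
  rw [eq_comm, mul_inv_eq_iff_eq_mul_of_invertible, eq_comm]

theorem IsDiagonalizable.of_mul_eq_mul {A B T : Matrix n n R} (hB : B.IsDiagonalizable)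
    (hT : IsUnit T) (hAB : A * T = T * B) : A.IsDiagonalizable := by
  obtain ⟨S, d, hS, hBS⟩ := isDiagonalizable_iff_exists_mul_eq.mp hB
  refine isDiagonalizable_iff_exists_mul_eq.mpr ⟨T * S, d, hT.mul hS, ?_⟩
  rw [← mul_assoc, hAB, mul_assoc, hBS, mul_assoc]

theorem IsDiagonalizable.smul {A : Matrix n n R} (hA : A.IsDiagonalizable) (c : R) :
    (c • A).IsDiagonalizable := by
  obtain ⟨S, d, hS, hAS⟩ := isDiagonalizable_iff_exists_mul_eq.mp hA
  refine isDiagonalizable_iff_exists_mul_eq.mpr ⟨S, c • d, hS, ?_⟩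
  rw [smul_mul, hAS, diagonal_smul, Matrix.mul_smul]

end CommRing

theorem IsHermitian.isDiagonalizable {𝕜 : Type*} [RCLike 𝕜] {A : Matrix n n 𝕜}
    (hA : A.IsHermitian) : A.IsDiagonalizable := by
  set U : Matrix n n 𝕜 := (hA.eigenvectorUnitary : Matrix n n 𝕜)
  refine isDiagonalizable_iff_exists_mul_eq.mpr
    ⟨U, RCLike.ofReal ∘ hA.eigenvalues, Unitary.isUnit_coe, ?_⟩
  conv_lhs => rw [hA.spectral_theorem]
  rw [Unitary.conjStarAlgAut_apply, mul_assoc, Unitary.coe_star_mul_self, mul_one]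

theorem isDiagonalizable_of_conjTranspose_eq_neg {A : Matrix n n ℂ} (hA : Aᴴ = -A) :
    A.IsDiagonalizable := by
  have hIA : (Complex.I • A).IsHermitian := by
    rw [IsHermitian, conjTranspose_smul, hA, smul_neg, Complex.star_def, Complex.conj_I, neg_smul,
      neg_neg]
  have h := hIA.isDiagonalizable.smul (-Complex.I)
  rwa [smul_smul, neg_mul, Complex.I_mul_I, neg_neg, one_smul] at h

theorem isDiagonalizable_map_ofReal_of_transpose_eq_neg {B : Matrix n n ℝ} (hB : Bᵀ = -B) :
    (B.map Complex.ofReal).IsDiagonalizable := by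
  refine isDiagonalizable_of_conjTranspose_eq_neg ?_
  rw [← conjTranspose_map _ fun x => (Complex.conj_ofReal x).symm,
    conjTranspose_eq_transpose_of_trivial, hB, Matrix.map_neg _ Complex.ofReal_neg]

end Matrix

open Matrix
theorem posdef_mul_skew_diagonalizable (n : ℕ)
    (Q P : Matrix (Fin n) (Fin n) ℝ)
    (hQ : Qᵀ = -Q) (hP : P.PosDef) :
    ∃ (S : Matrix (Fin n) (Fin n) ℂ) (d : Fin n → ℂ),
      IsUnit S ∧ (P * Q).map (Complex.ofReal) = S * Matrix.diagonal d * S⁻¹ := by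
  open scoped MatrixOrder in
  obtain ⟨R, hR_nonneg, hR_unit, hRR⟩ : ∃ R, 0 ≤ R ∧ IsUnit R ∧ R * R = P :=
    ⟨CFC.sqrt P, CFC.sqrt_nonneg P, (CFC.isUnit_sqrt_iff P hP.posSemidef.nonneg).mpr hP.isUnit,
      CFC.sqrt_mul_sqrt_self P hP.posSemidef.nonneg⟩
  have hR : Rᵀ = R := hR_nonneg.posSemidef.isHermitian.eq
  have hRQR : (R * Q * R)ᵀ = -(R * Q * R) := by
    rw [transpose_mul, transpose_mul, hQ, hR, neg_mul, mul_neg, mul_assoc]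
  have hPQR : P * Q * R = R * (R * Q * R) := by rw [← hRR]; simp only [mul_assoc]
  have hPQR_complex : (P * Q).map Complex.ofReal * R.map Complex.ofReal =
      R.map Complex.ofReal * (R * Q * R).map Complex.ofReal := by
    change Complex.ofRealHom.mapMatrix (P * Q) * Complex.ofRealHom.mapMatrix R =
      Complex.ofRealHom.mapMatrix R * Complex.ofRealHom.mapMatrix (R * Q * R)
    rw [← map_mul, ← map_mul, hPQR]
  exact (isDiagonalizable_map_ofReal_of_transpose_eq_neg hRQR).of_mul_eq_mul
    (hR_unit.map Complex.ofRealHom.mapMatrix) hPQR_complex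
end

section
/- If Q ∈ ℝ^{n×n} is skew-symmetric, P ∈ ℝ^{n×n} is symmetric positive definite, λ ∈ ℂ is an eigenvalue of PQ with eigenvector x ≠ 0, and z satisfies (PQ - λI)z = x, then a contradiction follows; equivalently, PQ has no nontrivial Jordan blocks: ker((PQ - λI)²) = ker(PQ - λI) for every eigenvalue λ. -/
/-!
`A = PQ` is skew-adjoint for the inner product `⟨x, y⟩ = xᴴ P⁻¹ y`, so its eigenvalues are
purely imaginary, and then `B = A - λ` is skew-adjoint as well. For a skew-adjoint `B`,
`‖Bz‖² = ⟨Bz, Bz⟩ = -⟨z, B²z⟩`, so `B²z = 0` forces `Bz = 0`.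
-/

open Matrix
open scoped ComplexOrder MatrixOrder

namespace Matrix

variable {n : Type*} [Fintype n]

def IsSkewAdjointWrt {R : Type*} [CommRing R] [StarRing R] (M A : Matrix n n R) : Prop :=
  Aᴴ * M = -(M * A)

lemma isSkewAdjointWrt_inv_mul {R : Type*} [CommRing R] [StarRing R] [DecidableEq n]
    {P Q : Matrix n n R} (hP : P.IsHermitian) (hPdet : IsUnit P.det) (hQ : Qᴴ = -Q) :
    IsSkewAdjointWrt P⁻¹ (P * Q) := by
  rw [IsSkewAdjointWrt, conjTranspose_mul, hQ, hP.eq, Matrix.mul_assoc, mul_nonsing_inv P hPdet,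
    ← Matrix.mul_assoc, nonsing_inv_mul P hPdet, Matrix.mul_one, Matrix.one_mul]

lemma IsSkewAdjointWrt.map_ofReal {M A : Matrix n n ℝ} (h : IsSkewAdjointWrt M A) :
    IsSkewAdjointWrt (M.map Complex.ofRealHom) (A.map Complex.ofRealHom) := by
  have hconj : Aᴴ.map Complex.ofRealHom = (A.map Complex.ofRealHom)ᴴ :=
    conjTranspose_map _ fun x => by simp
  rw [IsSkewAdjointWrt, ← hconj, ← Matrix.map_mul, ← Matrix.map_mul, h,
    Matrix.map_neg _ (map_neg Complex.ofRealHom)]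

lemma PosDef.map_ofReal [DecidableEq n] {M : Matrix n n ℝ} (hM : M.PosDef) :
    (M.map Complex.ofRealHom).PosDef := by
  obtain ⟨B, rfl⟩ := CStarAlgebra.nonneg_iff_eq_star_mul_self.mp hM.posSemidef.nonneg
  have hB : IsUnit (B.map Complex.ofRealHom).det := by
    have := (isUnit_iff_isUnit_det _).mp hM.isUnit
    rw [det_mul] at this
    exact RingHom.map_det Complex.ofRealHom B ▸ (isUnit_of_mul_isUnit_right this).map _
  have hmap : (star B * B).map Complex.ofRealHom
      = (B.map Complex.ofRealHom)ᴴ * B.map Complex.ofRealHom := by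
    rw [star_eq_conjTranspose, Matrix.map_mul, conjTranspose_map _ fun x => by simp]
  exact hmap ▸ PosDef.conjTranspose_mul_self _
    (mulVec_injective_iff_isUnit.mpr ((isUnit_iff_isUnit_det _).mpr hB))

namespace IsSkewAdjointWrt

variable {𝕜 : Type*} [RCLike 𝕜] {M A : Matrix n n 𝕜}

lemma dotProduct_mulVec_mulVec (h : IsSkewAdjointWrt M A) (x y : n → 𝕜) :
    star x ⬝ᵥ M *ᵥ (A *ᵥ y) = -(star (A *ᵥ x) ⬝ᵥ M *ᵥ y) := by
  rw [mulVec_mulVec, ← neg_neg (M * A), ← h, neg_mulVec, dotProduct_neg, ← mulVec_mulVec,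
    dotProduct_mulVec, star_mulVec]

lemma star_eq_neg_of_mulVec_eq_smul (hM : M.PosDef) (h : IsSkewAdjointWrt M A) {x : n → 𝕜}
    (hx : x ≠ 0) {μ : 𝕜} (hAx : A *ᵥ x = μ • x) : star μ = -μ := by
  have hpos : star x ⬝ᵥ M *ᵥ x ≠ 0 := (hM.dotProduct_mulVec_pos hx).ne'
  have key := h.dotProduct_mulVec_mulVec x x
  rw [hAx, mulVec_smul, dotProduct_smul, star_smul, smul_dotProduct, smul_eq_mul,
    smul_eq_mul] at key
  exact mul_right_cancel₀ hpos (by linear_combination key)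

lemma sub_smul_one [DecidableEq n] (h : IsSkewAdjointWrt M A) {μ : 𝕜} (hμ : star μ = -μ) :
    IsSkewAdjointWrt M (A - μ • 1) := by
  rw [IsSkewAdjointWrt, conjTranspose_sub, conjTranspose_smul, conjTranspose_one, hμ,
    Matrix.sub_mul, h, Matrix.mul_sub, neg_smul, Matrix.neg_mul, smul_mul_assoc,
    mul_smul_comm, Matrix.one_mul, Matrix.mul_one]
  abel

lemma mulVec_eq_zero_of_sq_mulVec_eq_zero [DecidableEq n] (hM : M.PosDef)
    (h : IsSkewAdjointWrt M A) {z : n → 𝕜} (hz : (A ^ 2) *ᵥ z = 0) : A *ᵥ z = 0 := by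
  by_contra hw
  refine (hM.dotProduct_mulVec_pos hw).ne' ?_
  rw [← neg_eq_zero, ← h.dotProduct_mulVec_mulVec, mulVec_mulVec _ A A, ← sq, hz,
    mulVec_zero, dotProduct_zero]

theorem sub_smul_one_mulVec_eq_zero_of_sq [DecidableEq n] (hM : M.PosDef)
    (h : IsSkewAdjointWrt M A) {μ : 𝕜} {z : n → 𝕜} (hz : ((A - μ • 1) ^ 2) *ᵥ z = 0) :
    (A - μ • 1) *ᵥ z = 0 := by
  by_contra hw
  have heigen : A *ᵥ ((A - μ • 1) *ᵥ z) = μ • ((A - μ • 1) *ᵥ z) := by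
    have hker : (A - μ • 1) *ᵥ ((A - μ • 1) *ᵥ z) = 0 := by rw [mulVec_mulVec, ← sq, hz]
    rwa [sub_mulVec, smul_mulVec, one_mulVec, sub_eq_zero] at hker
  have hμ := h.star_eq_neg_of_mulVec_eq_smul hM hw heigen
  exact hw ((h.sub_smul_one hμ).mulVec_eq_zero_of_sq_mulVec_eq_zero hM hz)

end IsSkewAdjointWrt

end Matrix

theorem posdef_mul_skew_no_jordan_blocks_general (n : ℕ)
    (Q P : Matrix (Fin n) (Fin n) ℝ)
    (hQ : Qᵀ = -Q) (hP : P.PosDef)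
    (lam : ℂ) :
    ∀ z : Fin n → ℂ,
      (((P * Q).map (Complex.ofReal) - lam • (1 : Matrix (Fin n) (Fin n) ℂ)) ^ 2).mulVec z = 0 →
      ((P * Q).map (Complex.ofReal) - lam • (1 : Matrix (Fin n) (Fin n) ℂ)).mulVec z = 0 := by
  intro z hz
  have hskew : IsSkewAdjointWrt P⁻¹ (P * Q) :=
    isSkewAdjointWrt_inv_mul hP.isHermitian ((isUnit_iff_isUnit_det P).mp hP.isUnit)
      (by rwa [conjTranspose_eq_transpose_of_trivial])
  exact hskew.map_ofReal.sub_smul_one_mulVec_eq_zero_of_sq hP.inv.map_ofReal hz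

theorem posdef_mul_skew_no_jordan_blocks (n : ℕ)
    (Q P : Matrix (Fin n) (Fin n) ℝ)
    (hQ : Qᵀ = -Q) (hP : P.PosDef)
    (lam : ℂ)
    (hev : ∃ x : Fin n → ℂ, x ≠ 0 ∧
      ((P * Q).map (Complex.ofReal)).mulVec x = lam • x) :
    ∀ z : Fin n → ℂ,
      (((P * Q).map (Complex.ofReal) - lam • (1 : Matrix (Fin n) (Fin n) ℂ)) ^ 2).mulVec z = 0 →
      ((P * Q).map (Complex.ofReal) - lam • (1 : Matrix (Fin n) (Fin n) ℂ)).mulVec z = 0 :=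
  posdef_mul_skew_no_jordan_blocks_general n Q P hQ hP lam
end
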